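/- For a ∈ B⁴, the function U_a(x) = log((1-|a|²)/(|a|²|x|² - 2a·x + 1)) + ((1-|x|²)/2)((1-|a|²)/(|a|²|x|² - 2a·x + 1) - 1) is biharmonic on the closed unit ball B⁴ and satisfies the vanishing Neumann condition ∂U_a/∂r = 0 on S³. -/

import Mathlib

/-!
Every function in sight depends on `x` only through `‖x‖²` and `⟪a, x⟫`, so its gradient has the
form `A x • x + B x • a`, and for such a function on `ℝⁿ` the Laplacian is
`⟪∇A, x⟫ + n A + ⟪∇B, a⟫`. Applied twice, this gives, with `d = ‖a‖²‖x‖² - 2⟪a, x⟫ + 1`,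
`ΔU = 4 - 4‖a‖²/d - 4(1 - ‖a‖²)(1 - ⟪a, x⟫)/d²` and then `Δ²U = 0` wherever `d ≠ 0`; on the closed
ball `d ≥ (1 - ‖a‖‖x‖)² > 0`. On the sphere the radial derivative is `A + B ⟪a, x⟫`, which
vanishes identically.
-/

open scoped BigOperators RealInnerProductSpace

/-- The Euclidean Laplacian of a function on `ℝⁿ` (as `EuclideanSpace`). -/
noncomputable def lapl {n : ℕ} (f : EuclideanSpace ℝ (Fin n) → ℝ)
    (x : EuclideanSpace ℝ (Fin n)) : ℝ :=
  ∑ i : Fin n, fderiv ℝ (fun y => fderiv ℝ f y (EuclideanSpace.single i 1)) x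
    (EuclideanSpace.single i 1)

open Filter Topology

section Gradient

variable {E : Type*} [NormedAddCommGroup E] [InnerProductSpace ℝ E] [CompleteSpace E]
  {f g : E → ℝ} {f' g' x : E}

theorem hasGradientAt_iff_hasFDerivAt_innerSL :
    HasGradientAt f f' x ↔ HasFDerivAt f (innerSL ℝ f') x := by
  rw [hasGradientAt_iff_hasFDerivAt]; rfl

theorem HasGradientAt.congr_gradient (hf : HasGradientAt f f' x) (h : f' = g') :
    HasGradientAt f g' x :=
  h ▸ hf

theorem HasGradientAt.add (hf : HasGradientAt f f' x) (hg : HasGradientAt g g' x) :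
    HasGradientAt (fun y => f y + g y) (f' + g') x := by
  rw [hasGradientAt_iff_hasFDerivAt_innerSL] at *
  rw [map_add]; exact hf.add hg

theorem HasGradientAt.sub (hf : HasGradientAt f f' x) (hg : HasGradientAt g g' x) :
    HasGradientAt (fun y => f y - g y) (f' - g') x := by
  rw [hasGradientAt_iff_hasFDerivAt_innerSL] at *
  rw [map_sub]; exact hf.sub hg

theorem HasGradientAt.mul (hf : HasGradientAt f f' x) (hg : HasGradientAt g g' x) :
    HasGradientAt (fun y => f y * g y) (f x • g' + g x • f') x := by
  rw [hasGradientAt_iff_hasFDerivAt_innerSL] at *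
  rw [map_add, map_smul, map_smul]; exact hf.mul hg

theorem HasDerivAt.comp_hasGradientAt {φ : ℝ → ℝ} {φ' : ℝ} (hφ : HasDerivAt φ φ' (f x))
    (hf : HasGradientAt f f' x) : HasGradientAt (fun y => φ (f y)) (φ' • f') x := by
  rw [hasGradientAt_iff_hasFDerivAt_innerSL] at *
  rw [map_smul]; exact hφ.comp_hasFDerivAt x hf

theorem HasGradientAt.inv (hf : HasGradientAt f f' x) (hx : f x ≠ 0) :
    HasGradientAt (fun y => (f y)⁻¹) (-(f x ^ 2)⁻¹ • f') x :=
  (hasDerivAt_inv hx).comp_hasGradientAt hf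

theorem HasGradientAt.div (hf : HasGradientAt f f' x) (hg : HasGradientAt g g' x)
    (hx : g x ≠ 0) :
    HasGradientAt (fun y => f y / g y) (f x • -(g x ^ 2)⁻¹ • g' + (g x)⁻¹ • f') x := by
  simpa only [div_eq_mul_inv] using hf.mul (hg.inv hx)

theorem HasGradientAt.pow (hf : HasGradientAt f f' x) (k : ℕ) :
    HasGradientAt (fun y => f y ^ k) ((k * f x ^ (k - 1)) • f') x :=
  (hasDerivAt_pow k (f x)).comp_hasGradientAt hf

theorem HasGradientAt.log (hf : HasGradientAt f f' x) (hx : f x ≠ 0) :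
    HasGradientAt (fun y => Real.log (f y)) ((f x)⁻¹ • f') x :=
  (Real.hasDerivAt_log hx).comp_hasGradientAt hf

theorem hasGradientAt_norm_sq : HasGradientAt (fun y : E => ‖y‖ ^ 2) ((2 : ℝ) • x) x := by
  rw [hasGradientAt_iff_hasFDerivAt_innerSL]
  convert (hasStrictFDerivAt_norm_sq x).hasFDerivAt using 1
  ext v; simp

theorem hasGradientAt_inner (a : E) : HasGradientAt (fun y => ⟪a, y⟫) a x := by
  rw [hasGradientAt_iff_hasFDerivAt_innerSL]
  exact (innerSL ℝ a).hasFDerivAt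

theorem HasGradientAt.hasDerivAt_radial (hf : HasGradientAt f f' x) :
    HasDerivAt (fun t : ℝ => f (t • x)) ⟪f', x⟫ 1 := by
  have hline : HasDerivAt (fun t : ℝ => t • x) x 1 := by
    simpa using (hasDerivAt_id (1 : ℝ)).smul_const x
  rw [hasGradientAt_iff_hasFDerivAt_innerSL, ← one_smul ℝ x] at hf
  exact hf.comp_hasDerivAt (1 : ℝ) hline

end Gradient

section Laplacian

variable {n : ℕ} {f g : EuclideanSpace ℝ (Fin n) → ℝ} {x : EuclideanSpace ℝ (Fin n)}

theorem Filter.EventuallyEq.lapl_eq (h : f =ᶠ[𝓝 x] g) : lapl f x = lapl g x := by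
  refine Finset.sum_congr rfl fun i _ => ?_
  have hfirst : (fun y => fderiv ℝ f y (EuclideanSpace.single i 1)) =ᶠ[𝓝 x]
      fun y => fderiv ℝ g y (EuclideanSpace.single i 1) :=
    (h.fderiv (𝕜 := ℝ)).mono fun y hy => congrArg (· (EuclideanSpace.single i 1)) hy
  rw [hfirst.fderiv_eq]

theorem lapl_eq_of_hasGradientAt {F A B : EuclideanSpace ℝ (Fin n) → ℝ}
    {a gA gB : EuclideanSpace ℝ (Fin n)}
    (hF : ∀ᶠ y in 𝓝 x, HasGradientAt F (A y • y + B y • a) y)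
    (hA : HasGradientAt A gA x) (hB : HasGradientAt B gB x) :
    lapl F x = ⟪gA, x⟫ + n * A x + ⟪gB, a⟫ := by
  have hsecond : ∀ i : Fin n,
      fderiv ℝ (fun y => fderiv ℝ F y (EuclideanSpace.single i 1)) x (EuclideanSpace.single i 1)
        = gA i * x i + A x + gB i * a i := by
    intro i
    have hfirst : (fun y => fderiv ℝ F y (EuclideanSpace.single i 1)) =ᶠ[𝓝 x]
        fun y => A y * y i + B y * a i := by
      filter_upwards [hF] with y hy
      simp [hy.fderiv_apply, inner_add_left, inner_smul_left, EuclideanSpace.inner_single_right]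
    have hder : HasFDerivAt (fun y => A y * y i + B y * a i) _ x :=
      (hA.hasFDerivAt.mul (EuclideanSpace.proj (𝕜 := ℝ) i).hasFDerivAt).add
        (hB.hasFDerivAt.mul_const (a i))
    rw [hfirst.fderiv_eq, hder.fderiv]
    simp only [add_apply, smul_apply, PiLp.proj_apply, PiLp.single_eq_same, smul_eq_mul,
      InnerProductSpace.toDual_apply_apply, EuclideanSpace.inner_single_right, Real.ringHom_apply,
      mul_one, one_mul]
    ring
  simp only [lapl, hsecond, Finset.sum_add_distrib]
  simp [PiLp.inner_apply, mul_comm]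

end Laplacian

noncomputable section

namespace MobiusBiharmonic

section Gradient

variable {E : Type*} [NormedAddCommGroup E] [InnerProductSpace ℝ E]

def denom (a y : E) : ℝ := ‖a‖ ^ 2 * ‖y‖ ^ 2 - 2 * ⟪a, y⟫ + 1

def U (a y : E) : ℝ :=
  Real.log ((1 - ‖a‖ ^ 2) / denom a y) +
    (1 - ‖y‖ ^ 2) / 2 * ((1 - ‖a‖ ^ 2) / denom a y - 1)

def Ur (a y : E) : ℝ :=
  1 - (1 + ‖a‖ ^ 2) / denom a y - ‖a‖ ^ 2 * (1 - ‖a‖ ^ 2) * (1 - ‖y‖ ^ 2) / denom a y ^ 2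

def Ua (a y : E) : ℝ :=
  2 / denom a y + (1 - ‖a‖ ^ 2) * (1 - ‖y‖ ^ 2) / denom a y ^ 2

def V (a y : E) : ℝ :=
  4 - 4 * ‖a‖ ^ 2 / denom a y - 4 * (1 - ‖a‖ ^ 2) * (1 - ⟪a, y⟫) / denom a y ^ 2

def Vr (a y : E) : ℝ :=
  8 * ‖a‖ ^ 4 / denom a y ^ 2 + 16 * ‖a‖ ^ 2 * (1 - ‖a‖ ^ 2) * (1 - ⟪a, y⟫) / denom a y ^ 3

def Va (a y : E) : ℝ :=
  (4 - 12 * ‖a‖ ^ 2) / denom a y ^ 2 - 16 * (1 - ‖a‖ ^ 2) * (1 - ⟪a, y⟫) / denom a y ^ 3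

variable {a y : E}

theorem denom_pos (ha : ‖a‖ < 1) (hy : ‖y‖ ≤ 1) : 0 < denom a y := by
  have hinner := real_inner_le_norm a y
  have hlt : ‖a‖ * ‖y‖ < 1 := by nlinarith [norm_nonneg a, norm_nonneg y]
  calc 0 < (1 - ‖a‖ * ‖y‖) ^ 2 := by nlinarith
    _ ≤ denom a y := by unfold denom; nlinarith

theorem eventually_denom_ne_zero (hy : denom a y ≠ 0) : ∀ᶠ z in 𝓝 y, denom a z ≠ 0 :=
  (by unfold denom; fun_prop : Continuous (denom a)).continuousAt.eventually_ne hy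

variable [CompleteSpace E]

theorem hasGradientAt_denom : HasGradientAt (denom a) ((2 * ‖a‖ ^ 2) • y - (2 : ℝ) • a) y := by
  have h := (((hasGradientAt_const y (‖a‖ ^ 2)).mul hasGradientAt_norm_sq).sub
    ((hasGradientAt_const y (2 : ℝ)).mul (hasGradientAt_inner a))).add
      (hasGradientAt_const y (1 : ℝ))
  refine h.congr_gradient ?_
  module

theorem hasGradientAt_U (ha : ‖a‖ ^ 2 ≠ 1) (hy : denom a y ≠ 0) :
    HasGradientAt (U a) (Ur a y • y + Ua a y • a) y := by
  have hq := (hasGradientAt_const y (1 - ‖a‖ ^ 2)).div hasGradientAt_denom hy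
  have h := (hq.log (div_ne_zero (sub_ne_zero.2 ha.symm) hy)).add
    ((((hasGradientAt_const y (1 : ℝ)).sub hasGradientAt_norm_sq).div
      (hasGradientAt_const y (2 : ℝ)) two_ne_zero).mul (hq.sub (hasGradientAt_const y (1 : ℝ))))
  refine h.congr_gradient ?_
  simp only [Ur, Ua]
  match_scalars
  · field_simp
    ring
  · field_simp

theorem hasGradientAt_V (hy : denom a y ≠ 0) :
    HasGradientAt (V a) (Vr a y • y + Va a y • a) y := by
  have h := ((hasGradientAt_const y (4 : ℝ)).sub
    ((hasGradientAt_const y (4 * ‖a‖ ^ 2)).div hasGradientAt_denom hy)).sub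
    (((hasGradientAt_const y (4 * (1 - ‖a‖ ^ 2))).mul
      ((hasGradientAt_const y (1 : ℝ)).sub (hasGradientAt_inner a))).div
        (hasGradientAt_denom.pow 2) (pow_ne_zero 2 hy))
  refine h.congr_gradient ?_
  simp only [Vr, Va]
  match_scalars <;> field_simp <;> ring

theorem deriv_U_smul_eq_zero (ha : ‖a‖ ^ 2 ≠ 1) (hy : ‖y‖ = 1) (hd : denom a y ≠ 0) :
    deriv (fun t : ℝ => U a (t • y)) 1 = 0 := by
  rw [(hasGradientAt_U ha hd).hasDerivAt_radial.deriv]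
  simp only [Ur, Ua, denom, inner_add_left, inner_smul_left, real_inner_self_eq_norm_sq,
    RCLike.conj_to_real, hy, one_pow, mul_one] at hd ⊢
  field_simp
  ring

end Gradient

section Laplacian

variable {a x : EuclideanSpace ℝ (Fin 4)}

theorem lapl_U (ha : ‖a‖ ^ 2 ≠ 1) (hx : denom a x ≠ 0) : lapl (U a) x = V a x := by
  have hd : HasGradientAt (denom a) _ x := hasGradientAt_denom
  have hUr : HasGradientAt (Ur a) _ x :=
    ((hasGradientAt_const x (1 : ℝ)).sub ((hasGradientAt_const x (1 + ‖a‖ ^ 2)).div hd hx)).sub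
      (((hasGradientAt_const x (‖a‖ ^ 2 * (1 - ‖a‖ ^ 2))).mul
        ((hasGradientAt_const x (1 : ℝ)).sub hasGradientAt_norm_sq)).div
          (hd.pow 2) (pow_ne_zero 2 hx))
  have hUa : HasGradientAt (Ua a) _ x :=
    ((hasGradientAt_const x (2 : ℝ)).div hd hx).add
      (((hasGradientAt_const x (1 - ‖a‖ ^ 2)).mul
        ((hasGradientAt_const x (1 : ℝ)).sub hasGradientAt_norm_sq)).div
          (hd.pow 2) (pow_ne_zero 2 hx))
  rw [lapl_eq_of_hasGradientAt
    ((eventually_denom_ne_zero hx).mono fun y hy => hasGradientAt_U ha hy) hUr hUa]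
  simp only [inner_add_left, inner_sub_left, inner_smul_left, inner_zero_left,
    real_inner_self_eq_norm_sq, real_inner_comm a x, RCLike.conj_to_real]
  unfold Ur V denom at *
  field_simp
  ring

theorem lapl_V (hx : denom a x ≠ 0) : lapl (V a) x = 0 := by
  have hd : HasGradientAt (denom a) _ x := hasGradientAt_denom
  have hlin := (hasGradientAt_const x (1 : ℝ)).sub (hasGradientAt_inner a)
  have hVr : HasGradientAt (Vr a) _ x :=
    ((hasGradientAt_const x (8 * ‖a‖ ^ 4)).div (hd.pow 2) (pow_ne_zero 2 hx)).add
      (((hasGradientAt_const x (16 * ‖a‖ ^ 2 * (1 - ‖a‖ ^ 2))).mul hlin).div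
        (hd.pow 3) (pow_ne_zero 3 hx))
  have hVa : HasGradientAt (Va a) _ x :=
    ((hasGradientAt_const x (4 - 12 * ‖a‖ ^ 2)).div (hd.pow 2) (pow_ne_zero 2 hx)).sub
      (((hasGradientAt_const x (16 * (1 - ‖a‖ ^ 2))).mul hlin).div
        (hd.pow 3) (pow_ne_zero 3 hx))
  rw [lapl_eq_of_hasGradientAt
    ((eventually_denom_ne_zero hx).mono fun y hy => hasGradientAt_V hy) hVr hVa]
  simp only [inner_add_left, inner_sub_left, inner_smul_left, inner_zero_left,
    real_inner_self_eq_norm_sq, real_inner_comm a x, RCLike.conj_to_real]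
  unfold Vr denom at *
  field_simp
  ring

theorem lapl_lapl_U (ha : ‖a‖ ^ 2 ≠ 1) (hx : denom a x ≠ 0) : lapl (lapl (U a)) x = 0 := by
  have hlapl : lapl (U a) =ᶠ[𝓝 x] V a :=
    (eventually_denom_ne_zero hx).mono fun y hy => lapl_U ha hy
  rw [hlapl.lapl_eq, lapl_V hx]

end Laplacian

end MobiusBiharmonic

end

/-- for `a ∈ B⁴`, the function
`U_a(x) = log((1-|a|²)/(|a|²|x|²-2a·x+1)) + ((1-|x|²)/2)((1-|a|²)/(|a|²|x|²-2a·x+1) - 1)`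
is biharmonic on the closed unit ball `B⁴` and satisfies `∂U_a/∂r = 0` on `S³`. -/
theorem stmt18 (a : EuclideanSpace ℝ (Fin 4)) (ha : ‖a‖ < 1) :
    let U : EuclideanSpace ℝ (Fin 4) → ℝ := fun x =>
      Real.log ((1 - ‖a‖ ^ 2) / (‖a‖ ^ 2 * ‖x‖ ^ 2 - 2 * ⟪a, x⟫ + 1)) +
        (1 - ‖x‖ ^ 2) / 2 *
          ((1 - ‖a‖ ^ 2) / (‖a‖ ^ 2 * ‖x‖ ^ 2 - 2 * ⟪a, x⟫ + 1) - 1)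
    (∀ x : EuclideanSpace ℝ (Fin 4), ‖x‖ ≤ 1 → lapl (lapl U) x = 0) ∧
    (∀ x : EuclideanSpace ℝ (Fin 4), ‖x‖ = 1 →
      deriv (fun t : ℝ => U (t • x)) 1 = 0) := by
  have ha' : ‖a‖ ^ 2 ≠ 1 := (pow_lt_one₀ (norm_nonneg a) ha two_ne_zero).ne
  exact ⟨fun x hx => MobiusBiharmonic.lapl_lapl_U ha' (MobiusBiharmonic.denom_pos ha hx).ne',
    fun x hx => MobiusBiharmonic.deriv_U_smul_eq_zero ha' hx
      (MobiusBiharmonic.denom_pos ha hx.le).ne'⟩
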